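/- arXiv:0801.4597 — 2 statements merged into one kernel-verified Lean document; each statement's English description precedes it below -/
import Mathlib

section
/- Let A be an n×n integer matrix and B an m×m integer matrix, and let Aᵗ, Bᵗ denote their transposes. The assignment v ⊗ w ↦ v⊠w induces a well-defined injective ℤ-linear map from ker(1_n − Aᵗ : ℤ^n → ℤ^n) ⊗_ℤ ker(1_m − Bᵗ : ℤ^m → ℤ^m) into ker(1_{nm} − (A⊠B)ᵗ : ℤ^{nm} → ℤ^{nm}). -/
/-!
Since `(A ⊗ₖ B) *ᵥ (v ⊠ w) = (A *ᵥ v) ⊠ (B *ᵥ w)`, the vector `v ⊠ w` is fixed by `A ⊗ₖ B` whenever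
`v` and `w` are fixed by `A` and `B`. On the ambient free modules `v ⊗ w ↦ v ⊠ w` is the
isomorphism `R^ι ⊗ R^κ ≃ R^(ι × κ)`, and `ker (1 - A) ⊗ ker (1 - B) → R^ι ⊗ R^κ` is injective as
soon as `ker (1 - B)` is flat, which over `ℤ` holds because it is torsion-free.
-/

open Matrix
open scoped Kronecker TensorProduct

namespace Matrix

variable {R ι κ : Type*} [CommRing R] [Fintype ι] [Fintype κ]

variable (R ι κ) in
noncomputable def kroneckerVecEquiv : (ι → R) ⊗[R] (κ → R) ≃ₗ[R] (ι × κ → R) :=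
  TensorProduct.congr (Finsupp.linearEquivFunOnFinite R R ι).symm
      (Finsupp.linearEquivFunOnFinite R R κ).symm ≪≫ₗ
    finsuppTensorFinsupp' R ι κ ≪≫ₗ Finsupp.linearEquivFunOnFinite R R (ι × κ)

@[simp]
theorem kroneckerVecEquiv_tmul (v : ι → R) (w : κ → R) :
    kroneckerVecEquiv R ι κ (v ⊗ₜ w) = fun p => v p.1 * w p.2 := by
  ext ⟨i, j⟩
  simp [kroneckerVecEquiv]

theorem kronecker_mulVec_kroneckerVec (A : Matrix ι ι R) (B : Matrix κ κ R) (v : ι → R)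
    (w : κ → R) :
    (A ⊗ₖ B) *ᵥ (fun p => v p.1 * w p.2) = fun p => (A *ᵥ v) p.1 * (B *ᵥ w) p.2 := by
  ext ⟨i, j⟩
  simp only [mulVec, dotProduct, kroneckerMap_apply, Fintype.sum_prod_type, Finset.sum_mul_sum]
  exact Finset.sum_congr rfl fun _ _ => Finset.sum_congr rfl fun _ _ => by ring

variable [DecidableEq ι] [DecidableEq κ]

theorem mem_ker_one_sub_mulVecLin {A : Matrix ι ι R} {v : ι → R} :
    v ∈ LinearMap.ker (1 - A).mulVecLin ↔ A *ᵥ v = v := by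
  rw [LinearMap.mem_ker, mulVecLin_apply, sub_mulVec, one_mulVec, sub_eq_zero, eq_comm]

theorem kronecker_mem_ker_one_sub_mulVecLin {A : Matrix ι ι R} {B : Matrix κ κ R} {v : ι → R}
    {w : κ → R} (hv : v ∈ LinearMap.ker (1 - A).mulVecLin)
    (hw : w ∈ LinearMap.ker (1 - B).mulVecLin) :
    (fun p : ι × κ => v p.1 * w p.2) ∈ LinearMap.ker (1 - A ⊗ₖ B).mulVecLin := by
  rw [mem_ker_one_sub_mulVecLin] at hv hw ⊢
  rw [kronecker_mulVec_kroneckerVec, hv, hw]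

noncomputable def kerTensorKerToKerKronecker (A : Matrix ι ι R) (B : Matrix κ κ R) :
    LinearMap.ker (1 - A).mulVecLin ⊗[R] LinearMap.ker (1 - B).mulVecLin →ₗ[R]
      LinearMap.ker (1 - A ⊗ₖ B).mulVecLin :=
  ((kroneckerVecEquiv R ι κ).toLinearMap ∘ₗ TensorProduct.mapIncl _ _).codRestrict _ fun x => by
    induction x using TensorProduct.induction_on with
    | zero => simp
    | tmul v w => simpa using kronecker_mem_ker_one_sub_mulVecLin v.2 w.2
    | add x y hx hy => simpa using add_mem hx hy

theorem coe_kerTensorKerToKerKronecker_tmul (A : Matrix ι ι R) (B : Matrix κ κ R)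
    (v : LinearMap.ker (1 - A).mulVecLin) (w : LinearMap.ker (1 - B).mulVecLin) :
    (kerTensorKerToKerKronecker A B (v ⊗ₜ w) : ι × κ → R) =
      fun p => (v : ι → R) p.1 * (w : κ → R) p.2 := by
  simp [kerTensorKerToKerKronecker]

theorem kerTensorKerToKerKronecker_injective (A : Matrix ι ι R) (B : Matrix κ κ R)
    [Module.Flat R (LinearMap.ker (1 - B).mulVecLin)] :
    Function.Injective (kerTensorKerToKerKronecker A B) := fun _ _ h =>
  (kroneckerVecEquiv R ι κ).injective.comp
    (Module.Flat.tensorProduct_mapIncl_injective_of_right _ _) (congrArg Subtype.val h)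

end Matrix

/-- The assignment `v ⊗ w ↦ v ⊠ w` (with `(v ⊠ w) (i,j) = v i * w j`, indexing `ℤ^{nm}`
by pairs) induces a well-defined injective `ℤ`-linear map from
`ker(1 - Aᵗ : ℤ^n → ℤ^n) ⊗ ker(1 - Bᵗ : ℤ^m → ℤ^m)` into
`ker(1 - (A ⊠ B)ᵗ : ℤ^{nm} → ℤ^{nm})`. -/
theorem kernel_tensor_embeds_kernel_kronecker {n m : ℕ}
    (A : Matrix (Fin n) (Fin n) ℤ) (B : Matrix (Fin m) (Fin m) ℤ) :
    ∃ g : (LinearMap.ker (1 - Aᵀ).mulVecLin ⊗[ℤ] LinearMap.ker (1 - Bᵀ).mulVecLin) →ₗ[ℤ]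
        LinearMap.ker (1 - (A ⊗ₖ B)ᵀ).mulVecLin,
      Function.Injective g ∧
      ∀ (v : LinearMap.ker (1 - Aᵀ).mulVecLin) (w : LinearMap.ker (1 - Bᵀ).mulVecLin),
        (g (v ⊗ₜ[ℤ] w) : Fin n × Fin m → ℤ) =
          fun p : Fin n × Fin m => (v : Fin n → ℤ) p.1 * (w : Fin m → ℤ) p.2 := by
  rw [← kroneckerMap_transpose]
  exact ⟨kerTensorKerToKerKronecker Aᵀ Bᵀ, kerTensorKerToKerKronecker_injective Aᵀ Bᵀ,
    coe_kerTensorKerToKerKronecker_tmul Aᵀ Bᵀ⟩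
end

section
/- Let A and A' be n×n nondegenerate 0-1 matrices and B and B' be m×m nondegenerate 0-1 matrices. If A⊠B = A'⊠B', then A = A' and B = B'. -/
open Matrix
open scoped Kronecker

/-- A 0-1 matrix: every entry is `0` or `1`. -/
def IsZeroOneMatrix {N : Type*} (A : Matrix N N ℂ) : Prop :=
  ∀ i j : N, A i j = 0 ∨ A i j = 1

/-- A matrix is nondegenerate if no row and no column is identically zero. -/
def IsNondegenerate {N : Type*} (A : Matrix N N ℂ) : Prop :=
  (∀ i, ∃ j, A i j ≠ 0) ∧ (∀ j, ∃ i, A i j ≠ 0)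

/-!
The zero pattern of `A ⊗ₖ B` is the product of the zero patterns of `A` and `B`. Nondegeneracy makes
both patterns nonempty, and a product of nonempty sets determines its factors, so `A` and `A'` have
the same zero pattern and, being 0-1 matrices, coincide. Cancelling a nonzero entry of `A` then
gives `B = B'`.
-/

namespace Matrix

variable {R l m n p : Type*}

theorem mul_eq_mul_of_kronecker_eq [Mul R] {A A' : Matrix l m R} {B B' : Matrix n p R}
    (h : A ⊗ₖ B = A' ⊗ₖ B') (i : l) (i' : m) (j : n) (j' : p) :
    A i i' * B j j' = A' i i' * B' j j' := by
  simpa only [kronecker_apply] using congrFun (congrFun h (i, j)) (i', j')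

theorem ne_zero_iff_of_kronecker_eq [MulZeroClass R] [NoZeroDivisors R]
    {A A' : Matrix l m R} {B B' : Matrix n p R} (h : A ⊗ₖ B = A' ⊗ₖ B')
    {i₀ : l} {i₀' : m} {j₀ : n} {j₀' : p} (hA : A i₀ i₀' ≠ 0) (hB : B j₀ j₀' ≠ 0) (i : l) (i' : m) :
    A i i' ≠ 0 ↔ A' i i' ≠ 0 := by
  have hB' : B' j₀ j₀' ≠ 0 := by
    have := mul_eq_mul_of_kronecker_eq h i₀ i₀' j₀ j₀'
    exact right_ne_zero_of_mul (this ▸ mul_ne_zero hA hB)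
  have hii' := mul_eq_mul_of_kronecker_eq h i i' j₀ j₀'
  exact ⟨fun hAii' => left_ne_zero_of_mul (hii' ▸ mul_ne_zero hAii' hB),
    fun hA'ii' => left_ne_zero_of_mul (hii'.symm ▸ mul_ne_zero hA'ii' hB')⟩

theorem kronecker_left_cancel [Mul R] [Zero R] [IsLeftCancelMulZero R]
    {A : Matrix l m R} {B B' : Matrix n p R} {i₀ : l} {i₀' : m} (hA : A i₀ i₀' ≠ 0)
    (h : A ⊗ₖ B = A ⊗ₖ B') : B = B' := by
  ext j j'
  exact mul_left_cancel₀ hA (mul_eq_mul_of_kronecker_eq h i₀ i₀' j j')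

end Matrix

theorem IsZeroOneMatrix.eq_of_ne_zero_iff {N : Type*} {A A' : Matrix N N ℂ}
    (hA : IsZeroOneMatrix A) (hA' : IsZeroOneMatrix A') (h : ∀ i j, A i j ≠ 0 ↔ A' i j ≠ 0) :
    A = A' := by
  ext i j
  rcases hA i j with h0 | h1 <;> rcases hA' i j with h0' | h1'
  · rw [h0, h0']
  · simpa [h0, h1'] using h i j
  · simpa [h1, h0'] using h i j
  · rw [h1, h1']

theorem kronecker_cancellation_general {n m : ℕ} (hn : 1 ≤ n) (hm : 1 ≤ m)
    (A A' : Matrix (Fin n) (Fin n) ℂ) (B B' : Matrix (Fin m) (Fin m) ℂ)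
    (hA01 : IsZeroOneMatrix A) (hAnd : IsNondegenerate A)
    (hA'01 : IsZeroOneMatrix A')
    (hBnd : IsNondegenerate B)
    (h : A ⊗ₖ B = A' ⊗ₖ B') : A = A' ∧ B = B' := by
  obtain ⟨i₀', hA⟩ := hAnd.1 ⟨0, hn⟩
  obtain ⟨j₀', hB⟩ := hBnd.1 ⟨0, hm⟩
  have hAA' : A = A' :=
    hA01.eq_of_ne_zero_iff hA'01 (ne_zero_iff_of_kronecker_eq h hA hB)
  subst hAA'
  exact ⟨rfl, kronecker_left_cancel hA h⟩

/-- For nondegenerate 0-1 matrices, the Kronecker product is cancellative: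
if `A ⊠ B = A' ⊠ B'` (with `A, A'` of size `n ≥ 1` and `B, B'` of size `m ≥ 1`),
then `A = A'` and `B = B'`. -/
theorem kronecker_cancellation {n m : ℕ} (hn : 1 ≤ n) (hm : 1 ≤ m)
    (A A' : Matrix (Fin n) (Fin n) ℂ) (B B' : Matrix (Fin m) (Fin m) ℂ)
    (hA01 : IsZeroOneMatrix A) (hAnd : IsNondegenerate A)
    (hA'01 : IsZeroOneMatrix A') (hA'nd : IsNondegenerate A')
    (hB01 : IsZeroOneMatrix B) (hBnd : IsNondegenerate B)
    (hB'01 : IsZeroOneMatrix B') (hB'nd : IsNondegenerate B')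
    (h : A ⊗ₖ B = A' ⊗ₖ B') : A = A' ∧ B = B' :=
  kronecker_cancellation_general hn hm A A' B B' hA01 hAnd hA'01 hBnd h
end
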